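/- Let Ω be a finite probability space, I a finite node index set, A the node-edge incidence matrix of the network, and consider the global problem V* = inf { Σ_{i∈I} J_P^i(f^i) + J_T(q) : A q_t(ω) + f_t(ω) = 0 for all t and ω }. Then for every deterministic price vector p and every deterministic resource vector r belonging to the range of the (block-diagonal extension of the) incidence matrix, the sandwich inequality holds: Σ_{i∈I} V̲_P^i[p^i] + V̲_T[p] ≤ V* ≤ Σ_{i∈I} V̄_P^i[r^i] + V̄_T[r], where V̲_P^i[p^i] = inf_{f^i} J_P^i(f^i) + E[⟨p^i, f^i⟩], V̲_T[p] = inf_q J_T(q) + E[⟨Aᵀp, q⟩], V̄_P^i[r^i] = inf { J_P^i(f^i) : f^i(ω) = r^i for all ω }, and V̄_T[r] = inf { J_T(q) : A q_t(ω) + r_t = 0 for all t and ω }. -/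

import Mathlib

/-!
Weak duality on both sides. For a price `p`, the price terms of the nodal and edge problems add
up to `E[⟨pₜ, A qₜ + fₜ⟩]`, which vanishes on every feasible point of the global problem, so the
decomposed price problems are a relaxation. For a resource `r`, pinning every nodal flow to the
deterministic `r` and routing it through the edges is a feasible point of the global problem.
-/

open Matrix

section Sandwich

variable {I : Type*} [Fintype I] {Ω : Type*} [Fintype Ω] [Nonempty Ω] {T m : ℕ}

/-- Nodal price value function `V̲_P^i[p^i] = inf_{f^i} J_P^i(f^i) + E[⟨p^i, f^i⟩]`. -/
noncomputable def nodalPriceValue (μ : Ω → ℝ) (JP : (Ω → Fin T → ℝ) → ℝ)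
    (pi : Fin T → ℝ) : EReal :=
  ⨅ f : Ω → Fin T → ℝ, ((JP f + ∑ ω, μ ω * ∑ t, pi t * f ω t : ℝ) : EReal)

/-- Edge price value function `V̲_T[p] = inf_q J_T(q) + E[⟨Aᵀp, q⟩]`. -/
noncomputable def edgePriceValue (μ : Ω → ℝ) (A : Matrix I (Fin m) ℝ)
    (JT : (Ω → Fin T → Fin m → ℝ) → ℝ) (p : I → Fin T → ℝ) : EReal :=
  ⨅ q : Ω → Fin T → Fin m → ℝ,
    ((JT q + ∑ ω, μ ω * ∑ t, Aᵀ.mulVec (fun i => p i t) ⬝ᵥ q ω t : ℝ) : EReal)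

/-- Nodal resource value function `V̄_P^i[r^i] = inf {J_P^i(f^i) : f^i(ω) = r^i ∀ω}`. -/
noncomputable def nodalResourceValue (JP : (Ω → Fin T → ℝ) → ℝ) (ri : Fin T → ℝ) :
    EReal :=
  ⨅ (f : Ω → Fin T → ℝ) (_ : ∀ ω, f ω = ri), ((JP f : ℝ) : EReal)

/-- Edge resource value function `V̄_T[r] = inf {J_T(q) : A qₜ(ω) + rₜ = 0 ∀t ∀ω}`. -/
noncomputable def edgeResourceValue (A : Matrix I (Fin m) ℝ)
    (JT : (Ω → Fin T → Fin m → ℝ) → ℝ) (r : I → Fin T → ℝ) : EReal :=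
  ⨅ (q : Ω → Fin T → Fin m → ℝ)
    (_ : ∀ (t : Fin T) (ω : Ω), A.mulVec (q ω t) + (fun i => r i t) = 0),
    ((JT q : ℝ) : EReal)

@[norm_cast]
lemma EReal.coe_finset_sum {ι : Type*} (s : Finset ι) (g : ι → ℝ) :
    ((∑ i ∈ s, g i : ℝ) : EReal) = ∑ i ∈ s, (g i : EReal) :=
  map_sum (⟨⟨Real.toEReal, EReal.coe_zero⟩, EReal.coe_add⟩ : ℝ →+ EReal) g s

lemma EReal.le_coe_add_iInf {ι : Sort*} {x : EReal} {a : ℝ} {g : ι → EReal}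
    (h : ∀ i, x ≤ a + g i) : x ≤ a + ⨅ i, g i := by
  rw [add_comm, ← sub_le_iff_le_add (.inl (coe_ne_bot a)) (.inl (coe_ne_top a))]
  exact le_iInf fun i => sub_le_of_le_add (add_comm (a : EReal) _ ▸ h i)

lemma Matrix.transpose_mulVec_dotProduct_add_dotProduct {n k R : Type*} [Fintype n] [Fintype k]
    [CommSemiring R] (A : Matrix n k R) (p : n → R) (x : k → R) (y : n → R) :
    Aᵀ *ᵥ p ⬝ᵥ x + p ⬝ᵥ y = p ⬝ᵥ (A *ᵥ x + y) := by
  rw [mulVec_transpose, ← dotProduct_mulVec, dotProduct_add]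

section

omit [Nonempty Ω]

def FlowBalance (A : Matrix I (Fin m) ℝ) (f : I → Ω → Fin T → ℝ)
    (q : Ω → Fin T → Fin m → ℝ) : Prop :=
  ∀ (t : Fin T) (ω : Ω), A.mulVec (q ω t) + (fun i => f i ω t) = 0

/-- The optimal value `V*` of the global problem. -/
noncomputable def globalValue (A : Matrix I (Fin m) ℝ) (JP : (i : I) → (Ω → Fin T → ℝ) → ℝ)
    (JT : (Ω → Fin T → Fin m → ℝ) → ℝ) : EReal :=
  ⨅ (f : I → Ω → Fin T → ℝ) (q : Ω → Fin T → Fin m → ℝ) (_ : FlowBalance A f q),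
    (((∑ i, JP i (f i)) + JT q : ℝ) : EReal)

lemma expected_price_pairings_cancel (μ : Ω → ℝ) (A : Matrix I (Fin m) ℝ)
    (p : I → Fin T → ℝ) {f : I → Ω → Fin T → ℝ} {q : Ω → Fin T → Fin m → ℝ}
    (hfq : FlowBalance A f q) :
    (∑ i, ∑ ω, μ ω * ∑ t, p i t * f i ω t) +
      ∑ ω, μ ω * ∑ t, Aᵀ *ᵥ (fun i => p i t) ⬝ᵥ q ω t = 0 := by
  have pointwise (ω : Ω) (t : Fin T) :
      ∑ i, p i t * f i ω t + Aᵀ *ᵥ (fun i => p i t) ⬝ᵥ q ω t = 0 := by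
    rw [add_comm, ← dotProduct, transpose_mulVec_dotProduct_add_dotProduct, hfq t ω,
      dotProduct_zero]
  simp_rw [Finset.mul_sum, Finset.sum_comm (γ := I), ← Finset.mul_sum, ← Finset.sum_add_distrib,
    ← mul_add, ← Finset.sum_add_distrib]
  simp only [pointwise, Finset.sum_const_zero, mul_zero]

lemma sum_nodalPriceValue_add_edgePriceValue_le (μ : Ω → ℝ) (A : Matrix I (Fin m) ℝ)
    (JP : (i : I) → (Ω → Fin T → ℝ) → ℝ) (JT : (Ω → Fin T → Fin m → ℝ) → ℝ)
    (p : I → Fin T → ℝ) {f : I → Ω → Fin T → ℝ} {q : Ω → Fin T → Fin m → ℝ}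
    (hfq : FlowBalance A f q) :
    (∑ i, nodalPriceValue μ (JP i) (p i)) + edgePriceValue μ A JT p ≤
      (((∑ i, JP i (f i)) + JT q : ℝ) : EReal) :=
  calc (∑ i, nodalPriceValue μ (JP i) (p i)) + edgePriceValue μ A JT p
      ≤ ((∑ i, (JP i (f i) + ∑ ω, μ ω * ∑ t, p i t * f i ω t) : ℝ) : EReal) +
          ((JT q + ∑ ω, μ ω * ∑ t, Aᵀ *ᵥ (fun i => p i t) ⬝ᵥ q ω t : ℝ) : EReal) := by
        rw [EReal.coe_finset_sum]
        exact add_le_add (Finset.sum_le_sum fun i _ => iInf_le _ (f i)) (iInf_le _ q)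
    _ = (((∑ i, JP i (f i)) + JT q : ℝ) : EReal) := by
        rw [← EReal.coe_add, EReal.coe_eq_coe_iff, Finset.sum_add_distrib]
        linear_combination expected_price_pairings_cancel μ A p hfq

lemma sum_nodalPriceValue_add_edgePriceValue_le_globalValue (μ : Ω → ℝ)
    (A : Matrix I (Fin m) ℝ) (JP : (i : I) → (Ω → Fin T → ℝ) → ℝ)
    (JT : (Ω → Fin T → Fin m → ℝ) → ℝ) (p : I → Fin T → ℝ) :
    (∑ i, nodalPriceValue μ (JP i) (p i)) + edgePriceValue μ A JT p ≤ globalValue A JP JT :=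
  le_iInf fun _ => le_iInf fun _ => le_iInf fun hfq =>
    sum_nodalPriceValue_add_edgePriceValue_le μ A JP JT p hfq

omit [Fintype Ω] in
lemma nodalResourceValue_eq (JP : (Ω → Fin T → ℝ) → ℝ) (ri : Fin T → ℝ) :
    nodalResourceValue JP ri = JP (fun _ => ri) :=
  le_antisymm (iInf₂_le _ fun _ => rfl) (le_iInf₂ fun _ hf => funext hf ▸ le_rfl)

omit [Fintype Ω] in
lemma globalValue_le_sum_nodalResourceValue_add_edgeResourceValue (A : Matrix I (Fin m) ℝ)
    (JP : (i : I) → (Ω → Fin T → ℝ) → ℝ) (JT : (Ω → Fin T → Fin m → ℝ) → ℝ)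
    (r : I → Fin T → ℝ) :
    globalValue A JP JT ≤ (∑ i, nodalResourceValue (JP i) (r i)) + edgeResourceValue A JT r := by
  simp only [nodalResourceValue_eq, ← EReal.coe_finset_sum]
  refine EReal.le_coe_add_iInf fun q => EReal.le_coe_add_iInf fun hq => ?_
  rw [← EReal.coe_add]
  exact iInf₂_le_of_le (fun i _ => r i) q (iInf_le_of_le hq le_rfl)

end

theorem sandwich_price_resource_bounds_general
    (μ : Ω → ℝ)
    (A : Matrix I (Fin m) ℝ)
    (JP : (i : I) → (Ω → Fin T → ℝ) → ℝ) (JT : (Ω → Fin T → Fin m → ℝ) → ℝ)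
    (p : I → Fin T → ℝ) (r : I → Fin T → ℝ) :
    (∑ i, nodalPriceValue μ (JP i) (p i)) + edgePriceValue μ A JT p ≤
        (⨅ (f : I → Ω → Fin T → ℝ) (q : Ω → Fin T → Fin m → ℝ)
          (_ : ∀ (t : Fin T) (ω : Ω), A.mulVec (q ω t) + (fun i => f i ω t) = 0),
          (((∑ i, JP i (f i)) + JT q : ℝ) : EReal)) ∧
      (⨅ (f : I → Ω → Fin T → ℝ) (q : Ω → Fin T → Fin m → ℝ)
          (_ : ∀ (t : Fin T) (ω : Ω), A.mulVec (q ω t) + (fun i => f i ω t) = 0),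
          (((∑ i, JP i (f i)) + JT q : ℝ) : EReal)) ≤
        (∑ i, nodalResourceValue (JP i) (r i)) + edgeResourceValue A JT r :=
  ⟨sum_nodalPriceValue_add_edgePriceValue_le_globalValue μ A JP JT p,
    globalValue_le_sum_nodalResourceValue_add_edgeResourceValue A JP JT r⟩

/-- Sandwich inequality: for every deterministic price `p` and every
deterministic resource `r` in the range of the incidence matrix,
`Σᵢ V̲_P^i[p^i] + V̲_T[p] ≤ V* ≤ Σᵢ V̄_P^i[r^i] + V̄_T[r]`, where `V*` is the
optimal value of the global problem with coupling constraint
`A qₜ(ω) + fₜ(ω) = 0` for all `t` and `ω`. -/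
theorem sandwich_price_resource_bounds
    (μ : Ω → ℝ) (hμ0 : ∀ ω, 0 ≤ μ ω) (hμ1 : ∑ ω, μ ω = 1)
    (A : Matrix I (Fin m) ℝ)
    (JP : (i : I) → (Ω → Fin T → ℝ) → ℝ) (JT : (Ω → Fin T → Fin m → ℝ) → ℝ)
    (p : I → Fin T → ℝ) (r : I → Fin T → ℝ)
    (hr : ∀ t : Fin T, ∃ q0 : Fin m → ℝ, A.mulVec q0 + (fun i => r i t) = 0) :
    (∑ i, nodalPriceValue μ (JP i) (p i)) + edgePriceValue μ A JT p ≤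
        (⨅ (f : I → Ω → Fin T → ℝ) (q : Ω → Fin T → Fin m → ℝ)
          (_ : ∀ (t : Fin T) (ω : Ω), A.mulVec (q ω t) + (fun i => f i ω t) = 0),
          (((∑ i, JP i (f i)) + JT q : ℝ) : EReal)) ∧
      (⨅ (f : I → Ω → Fin T → ℝ) (q : Ω → Fin T → Fin m → ℝ)
          (_ : ∀ (t : Fin T) (ω : Ω), A.mulVec (q ω t) + (fun i => f i ω t) = 0),
          (((∑ i, JP i (f i)) + JT q : ℝ) : EReal)) ≤
        (∑ i, nodalResourceValue (JP i) (r i)) + edgeResourceValue A JT r :=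
  sandwich_price_resource_bounds_general μ A JP JT p r

end Sandwich
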